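/- arXiv:2205.06131 — 4 statements merged into one kernel-verified Lean document; each statement's English description precedes it below -/
import Mathlib

section
/- Let s be a finite index set, let (X_i)_{i∈s} and N be binary random variables on a probability space (Ω, ℱ, P) such that the family consisting of all the X_i together with N is mutually independent, and define Y = N ∨ ⋁_{i∈s} X_i (pointwise OR). If j ∈ s satisfies P(X_j = 0) > 0, and P(N = 1) > 0, then P(X_j = 1) < P(Y = 1). -/
open MeasureTheory ProbabilityTheory

/-- General family form: if `Y` is the pointwise OR of a mutually independent family
`(X i)_{i ∈ s}` together with a noise variable `N`, `j ∈ s`, `P(X j = 0) > 0`, and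
`P(N = 1) > 0`, then `P(X j = 1) < P(Y = 1)`. Binary values are encoded by `Bool`
with `true` playing the role of `1`. -/
theorem bscm_cause_lt_effect_family {Ω ι : Type*} [MeasurableSpace Ω] (μ : Measure Ω)
    [IsProbabilityMeasure μ]
    (s : Finset ι) (X : ι → Ω → Bool) (N : Ω → Bool)
    (hX : ∀ i, Measurable (X i)) (hN : Measurable N)
    (hindep : iIndepFun
      (fun o : Option {i // i ∈ s} => Option.elim o N (fun i => X i.1)) μ)
    (Y : Ω → Bool) (hY : Y = fun ω => N ω ⊔ s.sup (fun i => X i ω))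
    (j : ι) (hj : j ∈ s)
    (hXj0 : 0 < μ {ω | X j ω = false}) (hN1 : 0 < μ {ω | N ω = true}) :
    μ {ω | X j ω = true} < μ {ω | Y ω = true} := by
  -- independence of N and X j
  have hind : IndepFun N (X j) μ := by
    have := hindep.indepFun (i := (none : Option {i // i ∈ s}))
      (j := some ⟨j, hj⟩) (by simp)
    simpa using this
  set A : Set Ω := {ω | X j ω = true} with hA
  set B : Set Ω := {ω | X j ω = false} ∩ {ω | N ω = true} with hB
  have hAm : MeasurableSet A := (hX j) (measurableSet_singleton true)
  have hBm : MeasurableSet B :=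
    ((hX j) (measurableSet_singleton false)).inter (hN (measurableSet_singleton true))
  have hdisj : Disjoint A B := by
    refine Set.disjoint_left.mpr ?_
    rintro ω (h1 : X j ω = true) ⟨h2, _⟩
    exact absurd h1 (by simp [Set.mem_setOf_eq] at h2; simp [h2])
  have hBpos : 0 < μ B := by
    have := hind.measure_inter_preimage_eq_mul {true} {false}
    have h := hind.symm.measure_inter_preimage_eq_mul {false} {true}
      (measurableSet_singleton false) (measurableSet_singleton true)
    have hb : B = X j ⁻¹' {false} ∩ N ⁻¹' {true} := by
      ext ω; simp [hB, Set.mem_setOf_eq]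
    rw [hb, h]
    exact ENNReal.mul_pos (ne_of_gt hXj0) (ne_of_gt hN1)
  have hsub : A ∪ B ⊆ {ω | Y ω = true} := by
    rintro ω (hω | hω)
    · have h1 : X j ω ≤ s.sup (fun i => X i ω) := Finset.le_sup (f := fun i => X i ω) hj
      simp only [hY, Set.mem_setOf_eq]
      have : s.sup (fun i => X i ω) = true := by
        rw [Set.mem_setOf_eq] at hω
        exact le_antisymm (le_top) (hω ▸ h1)
      simp [this]
    · obtain ⟨_, h2⟩ := hω
      rw [Set.mem_setOf_eq] at h2
      simp [hY, Set.mem_setOf_eq, h2]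
  calc μ A < μ A + μ B := ENNReal.lt_add_right (measure_ne_top μ A) (ne_of_gt hBpos)
    _ = μ (A ∪ B) := (measure_union hdisj hBm).symm
    _ ≤ μ {ω | Y ω = true} := measure_mono hsub
end

section
/- Let s be a finite index set, let (X_i)_{i∈s} and N be binary random variables on a probability space (Ω, ℱ, P) such that the family consisting of all the X_i together with N is mutually independent, and define Y = N ∨ ⋁_{i∈s} X_i (pointwise OR). If j ∈ s satisfies P(X_j = 1) > 0 and P(X_j = 0) > 0, and P(N = 1) > 0, then P(Y = 1 | X_j = 1) = 1 and P(X_j = 1 | Y = 1) = P(X_j = 1)/P(Y = 1) < 1; in particular P(X_j = 1 | Y = 1) < P(Y = 1 | X_j = 1). -/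
open MeasureTheory ProbabilityTheory

lemma measurable_sup2_bool {Ω : Type*} [MeasurableSpace Ω] (f g : Ω → Bool)
    (hf : Measurable f) (hg : Measurable g) : Measurable (fun ω => f ω ⊔ g ω) := by
  apply measurable_to_bool
  have : (fun ω => f ω ⊔ g ω) ⁻¹' {true} = f ⁻¹' {true} ∪ g ⁻¹' {true} := by
    ext ω; simp [Bool.max_eq_or]
  rw [this]
  exact (hf (measurableSet_singleton true)).union (hg (measurableSet_singleton true))

lemma measurable_finset_sup_bool {Ω ι : Type*} [MeasurableSpace Ω] (s : Finset ι)
    (X : ι → Ω → Bool) (hX : ∀ i, Measurable (X i)) :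
    Measurable (fun ω => s.sup (fun i => X i ω)) := by
  classical
  induction s using Finset.induction_on with
  | empty => simpa using measurable_const
  | insert _ _ h ih =>
    simp only [Finset.sup_insert]
    exact measurable_sup2_bool _ _ (hX _) ih

/-- General family form of the forward direction of the b-SCM causal-direction criterion:
`Y` is the pointwise OR of a mutually independent family `(X i)_{i ∈ s}` together with a
noise variable `N`; if `j ∈ s`, `P(X j = 1) > 0`, `P(X j = 0) > 0`, and `P(N = 1) > 0`,
then `P(Y = 1 | X j = 1) = 1`, `P(X j = 1 | Y = 1) = P(X j = 1)/P(Y = 1) < 1`, and in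
particular `P(X j = 1 | Y = 1) < P(Y = 1 | X j = 1)`. Conditional probability is expressed
via `ProbabilityTheory.cond μ B A = P(A | B)`. Binary values are encoded by `Bool` with
`true` playing the role of `1`. -/
theorem bscm_causal_direction_forward_family {Ω ι : Type*} [MeasurableSpace Ω] (μ : Measure Ω)
    [IsProbabilityMeasure μ]
    (s : Finset ι) (X : ι → Ω → Bool) (N : Ω → Bool)
    (hX : ∀ i, Measurable (X i)) (hN : Measurable N)
    (hindep : iIndepFun
      (fun o : Option {i // i ∈ s} => Option.elim o N (fun i => X i.1)) μ)
    (Y : Ω → Bool) (hY : Y = fun ω => N ω ⊔ s.sup (fun i => X i ω))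
    (j : ι) (hj : j ∈ s)
    (hXj1 : 0 < μ {ω | X j ω = true}) (hXj0 : 0 < μ {ω | X j ω = false})
    (hN1 : 0 < μ {ω | N ω = true}) :
    ProbabilityTheory.cond μ {ω | X j ω = true} {ω | Y ω = true} = 1
      ∧ ProbabilityTheory.cond μ {ω | Y ω = true} {ω | X j ω = true}
          = μ {ω | X j ω = true} / μ {ω | Y ω = true}
      ∧ μ {ω | X j ω = true} / μ {ω | Y ω = true} < 1
      ∧ ProbabilityTheory.cond μ {ω | Y ω = true} {ω | X j ω = true}
          < ProbabilityTheory.cond μ {ω | X j ω = true} {ω | Y ω = true} := by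
  set A := {ω | X j ω = true} with hA
  set B := {ω | Y ω = true} with hB
  have hmA : MeasurableSet A := (hX j) (measurableSet_singleton true)
  have hmY : Measurable Y := by
    subst hY
    exact measurable_sup2_bool _ _ hN (measurable_finset_sup_bool s X hX)
  have hmB : MeasurableSet B := hmY (measurableSet_singleton true)
  have hAB : A ⊆ B := by
    intro ω hω
    simp only [hB, hY, Set.mem_setOf_eq]
    have h1 : X j ω ≤ s.sup (fun i => X i ω) := Finset.le_sup (f := fun i => X i ω) hj
    rw [Set.mem_setOf_eq.mp hω] at h1
    have hsup : s.sup (fun i => X i ω) = true := top_le_iff.mp h1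
    simp [hsup, Bool.max_eq_or]
  have hNB : {ω | N ω = true} ⊆ B := by
    intro ω hω
    simp only [hB, hY, Set.mem_setOf_eq]
    simp [Set.mem_setOf_eq.mp hω, Bool.max_eq_or]
  have hAne : μ A ≠ 0 := hXj1.ne'
  have hAtop : μ A ≠ ⊤ := measure_ne_top μ A
  have hBtop : μ B ≠ ⊤ := measure_ne_top μ B
  have hind : IndepFun N (X j) μ := by
    have := hindep.indepFun (i := (none : Option {i // i ∈ s})) (j := some ⟨j, hj⟩)
      (by simp)
    exact this
  have hmul : μ ({ω | N ω = true} ∩ {ω | X j ω = false})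
      = μ {ω | N ω = true} * μ {ω | X j ω = false} := by
    have := hind.measure_inter_preimage_eq_mul {true} {false}
      (measurableSet_singleton _) (measurableSet_singleton _)
    simpa [Set.preimage, Set.mem_setOf_eq] using this
  have hpos : 0 < μ ({ω | N ω = true} ∩ {ω | X j ω = false}) := by
    rw [hmul]; exact ENNReal.mul_pos hN1.ne' hXj0.ne'
  have hlt : μ A < μ B := by
    have hdisj : Disjoint A ({ω | N ω = true} ∩ {ω | X j ω = false}) := by
      rw [Set.disjoint_left]
      rintro ω hω ⟨-, hω2⟩
      simp only [hA, Set.mem_setOf_eq] at hω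
      simp only [Set.mem_setOf_eq] at hω2
      rw [hω] at hω2; exact Bool.noConfusion hω2
    have hsub : A ∪ ({ω | N ω = true} ∩ {ω | X j ω = false}) ⊆ B := by
      rintro ω (hω | ⟨hω, -⟩)
      · exact hAB hω
      · exact hNB hω
    have hm2 : MeasurableSet ({ω | N ω = true} ∩ {ω | X j ω = false}) :=
      (hN (measurableSet_singleton true)).inter ((hX j) (measurableSet_singleton false))
    calc μ A < μ A + μ ({ω | N ω = true} ∩ {ω | X j ω = false}) :=
          ENNReal.lt_add_right hAtop hpos.ne'
      _ = μ (A ∪ ({ω | N ω = true} ∩ {ω | X j ω = false})) :=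
          (measure_union hdisj hm2).symm
      _ ≤ μ B := measure_mono hsub
  have hBne : μ B ≠ 0 := (hXj1.trans_le (measure_mono hAB)).ne'
  have h1 : cond μ A B = 1 := by
    rw [cond_apply hmA, Set.inter_eq_left.mpr hAB,
      ENNReal.inv_mul_cancel hAne hAtop]
  have h2 : cond μ B A = μ A / μ B := by
    rw [cond_apply hmB, Set.inter_comm, Set.inter_eq_left.mpr hAB,
      div_eq_mul_inv, mul_comm]
  have h3 : μ A / μ B < 1 := by
    rw [ENNReal.div_lt_iff (Or.inl hBne) (Or.inl hBtop), one_mul]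
    exact hlt
  exact ⟨h1, h2, h3, by rw [h1, h2]; exact h3⟩
end

section
/- Let Y and W be independent binary random variables on a probability space (Ω, ℱ, P) with P(Y = 1) > 0, P(Y = 0) > 0, and P(W = 1) > 0, and define X = Y ∨ W (pointwise OR). Then P(Y = 1 | X = 1) < P(X = 1 | Y = 1), and in fact P(X = 1 | Y = 1) = 1 while P(Y = 1 | X = 1) = P(Y = 1)/P(X = 1) < 1. -/
open MeasureTheory ProbabilityTheory

/-- Case 1 of the backward direction of the b-SCM causal-direction criterion: if `Y` and `W`
are independent binary random variables with `P(Y = 1) > 0`, `P(Y = 0) > 0`, `P(W = 1) > 0`,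
and `X = Y ∨ W` (pointwise OR), then `P(Y = 1 | X = 1) < P(X = 1 | Y = 1)`, and in fact
`P(X = 1 | Y = 1) = 1` while `P(Y = 1 | X = 1) = P(Y = 1)/P(X = 1) < 1`.
Conditional probability is expressed via `ProbabilityTheory.cond μ B A = P(A | B)`.
Binary values are encoded by `Bool` with `true` playing the role of `1`. -/
theorem bscm_causal_direction_backward_case1 {Ω : Type*} [MeasurableSpace Ω] (μ : Measure Ω)
    [IsProbabilityMeasure μ]
    (Y W : Ω → Bool) (hYm : Measurable Y) (hWm : Measurable W)
    (hindep : IndepFun Y W μ)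
    (hY1 : 0 < μ {ω | Y ω = true}) (hY0 : 0 < μ {ω | Y ω = false})
    (hW1 : 0 < μ {ω | W ω = true})
    (X : Ω → Bool) (hX : X = fun ω => Y ω || W ω) :
    ProbabilityTheory.cond μ {ω | X ω = true} {ω | Y ω = true}
        < ProbabilityTheory.cond μ {ω | Y ω = true} {ω | X ω = true}
      ∧ ProbabilityTheory.cond μ {ω | Y ω = true} {ω | X ω = true} = 1
      ∧ ProbabilityTheory.cond μ {ω | X ω = true} {ω | Y ω = true}
          = μ {ω | Y ω = true} / μ {ω | X ω = true}
      ∧ μ {ω | Y ω = true} / μ {ω | X ω = true} < 1 := by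
  set A : Set Ω := {ω | Y ω = true} with hA
  set B : Set Ω := {ω | X ω = true} with hB
  have hAm : MeasurableSet A := hYm (measurableSet_singleton true)
  have hBeq : B = A ∪ ({ω | Y ω = false} ∩ {ω | W ω = true}) := by
    ext ω
    simp only [hB, hA, hX, Set.mem_setOf_eq, Set.mem_union, Set.mem_inter_iff, Bool.or_eq_true]
    cases h : Y ω <;> simp [h]
  have hCm : MeasurableSet ({ω | Y ω = false} ∩ {ω | W ω = true}) :=
    (hYm (measurableSet_singleton false)).inter (hWm (measurableSet_singleton true))
  have hBm : MeasurableSet B := hBeq ▸ hAm.union hCm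
  have hdisj : Disjoint A ({ω | Y ω = false} ∩ {ω | W ω = true}) := by
    rw [Set.disjoint_left]
    intro ω hωA hωC
    simp only [hA, Set.mem_setOf_eq] at hωA
    simp only [Set.mem_inter_iff, Set.mem_setOf_eq] at hωC
    rw [hωA] at hωC
    exact Bool.noConfusion hωC.1
  have hμB : μ B = μ A + μ ({ω | Y ω = false} ∩ {ω | W ω = true}) := by
    rw [hBeq, measure_union hdisj hCm]
  have hCpos : 0 < μ ({ω | Y ω = false} ∩ {ω | W ω = true}) := by
    have := hindep.measure_inter_preimage_eq_mul {false} {true}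
      (measurableSet_singleton false) (measurableSet_singleton true)
    have heq : Y ⁻¹' {false} ∩ W ⁻¹' {true} = {ω | Y ω = false} ∩ {ω | W ω = true} := rfl
    rw [heq] at this
    rw [this]
    exact ENNReal.mul_pos hY0.ne' hW1.ne'
  have hAne : μ A ≠ ⊤ := measure_ne_top μ A
  have hAB : μ A < μ B := by
    rw [hμB]
    exact ENNReal.lt_add_right hAne hCpos.ne'
  have hBne : μ B ≠ ⊤ := measure_ne_top μ B
  have hBpos : 0 < μ B := lt_of_le_of_lt zero_le hAB
  have hsub : A ⊆ B := hBeq ▸ Set.subset_union_left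
  have h1 : ProbabilityTheory.cond μ A B = 1 := by
    rw [cond_apply hAm, Set.inter_eq_left.mpr hsub, ENNReal.inv_mul_cancel hY1.ne' hAne]
  have h2 : ProbabilityTheory.cond μ B A = μ A / μ B := by
    rw [cond_apply hBm, Set.inter_comm, Set.inter_eq_left.mpr hsub, ENNReal.div_eq_inv_mul]
  have h3 : μ A / μ B < 1 := by
    rw [ENNReal.div_lt_iff (Or.inl hBpos.ne') (Or.inl hBne), one_mul]
    exact hAB
  exact ⟨by rw [h1, h2]; exact h3, h1, h2, h3⟩
end

section
/- Let Z, N₁, N₂ be mutually independent binary random variables on a probability space (Ω, ℱ, P), and define X = Z ∨ N₁ and Y = Z ∨ N₂ (pointwise OR). Then P(X = 1 ∧ Y = 1) − P(X = 1) · P(Y = 1) = P(Z = 1) · P(Z = 0) · (1 − P(N₁ = 1)) · (1 − P(N₂ = 1)). In particular, if 0 < P(Z = 1) < 1, P(N₁ = 1) < 1, and P(N₂ = 1) < 1, then P(X = 1 ∧ Y = 1) > P(X = 1) · P(Y = 1), so X and Y are dependent. -/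
open MeasureTheory ProbabilityTheory

/-- Dependence induced by a common cause: if `Z`, `N₁`, `N₂` are mutually independent binary
random variables, `X = Z ∨ N₁`, `Y = Z ∨ N₂` (pointwise OR), then
`P(X=1 ∧ Y=1) − P(X=1)·P(Y=1) = P(Z=1)·P(Z=0)·(1 − P(N₁=1))·(1 − P(N₂=1))` (stated in the
real numbers via `ENNReal.toReal`). In particular, if `0 < P(Z=1) < 1`, `P(N₁=1) < 1` and
`P(N₂=1) < 1`, then `P(X=1 ∧ Y=1) > P(X=1)·P(Y=1)`, so `X` and `Y` are dependent.
Binary values are encoded by `Bool` with `true` playing the role of `1`. -/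
theorem bscm_common_cause_dependence {Ω : Type*} [MeasurableSpace Ω] (μ : Measure Ω)
    [IsProbabilityMeasure μ]
    (Z N₁ N₂ : Ω → Bool) (hZ : Measurable Z) (hN₁ : Measurable N₁) (hN₂ : Measurable N₂)
    (hindep : iIndepFun ![Z, N₁, N₂] μ)
    (X Y : Ω → Bool) (hX : X = fun ω => Z ω || N₁ ω) (hY : Y = fun ω => Z ω || N₂ ω) :
    ((μ ({ω | X ω = true} ∩ {ω | Y ω = true})).toReal
        - (μ {ω | X ω = true}).toReal * (μ {ω | Y ω = true}).toReal
      = (μ {ω | Z ω = true}).toReal * (μ {ω | Z ω = false}).toReal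
          * (1 - (μ {ω | N₁ ω = true}).toReal) * (1 - (μ {ω | N₂ ω = true}).toReal))
    ∧ (0 < μ {ω | Z ω = true} → μ {ω | Z ω = true} < 1
        → μ {ω | N₁ ω = true} < 1 → μ {ω | N₂ ω = true} < 1
        → μ ({ω | X ω = true} ∩ {ω | Y ω = true})
              > μ {ω | X ω = true} * μ {ω | Y ω = true}
          ∧ ¬ IndepFun X Y μ) := by
  subst hX hY
  -- measurable sets
  have mZt : MeasurableSet {ω | Z ω = true} := hZ (measurableSet_singleton true)
  have mZf : MeasurableSet {ω | Z ω = false} := hZ (measurableSet_singleton false)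
  have mN1t : MeasurableSet {ω | N₁ ω = true} := hN₁ (measurableSet_singleton true)
  have mN2t : MeasurableSet {ω | N₂ ω = true} := hN₂ (measurableSet_singleton true)
  have mN1f : MeasurableSet {ω | N₁ ω = false} := hN₁ (measurableSet_singleton false)
  have mN2f : MeasurableSet {ω | N₂ ω = false} := hN₂ (measurableSet_singleton false)
  -- abbreviations
  set z := (μ {ω | Z ω = true}).toReal with hz
  set w := (μ {ω | Z ω = false}).toReal with hw
  set n₁ := (μ {ω | N₁ ω = true}).toReal with hn1
  set n₂ := (μ {ω | N₂ ω = true}).toReal with hn2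
  set b₁ := (μ {ω | N₁ ω = false}).toReal with hb1
  set b₂ := (μ {ω | N₂ ω = false}).toReal with hb2
  have hfin : ∀ s : Set Ω, μ s ≠ ⊤ := fun s => (measure_lt_top μ s).ne
  -- complements
  have hcZ : {ω | Z ω = false} = {ω | Z ω = true}ᶜ := by
    ext ω
    simp only [Set.mem_setOf_eq, Set.mem_compl_iff]
    exact Bool.eq_false_iff
  have hcN1 : {ω | N₁ ω = false} = {ω | N₁ ω = true}ᶜ := by
    ext ω
    simp only [Set.mem_setOf_eq, Set.mem_compl_iff]
    exact Bool.eq_false_iff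
  have hcN2 : {ω | N₂ ω = false} = {ω | N₂ ω = true}ᶜ := by
    ext ω
    simp only [Set.mem_setOf_eq, Set.mem_compl_iff]
    exact Bool.eq_false_iff
  have hsum : ∀ (A : Set Ω), MeasurableSet A → (μ A).toReal + (μ Aᶜ).toReal = 1 := by
    intro A hA
    rw [← ENNReal.toReal_add (hfin _) (hfin _), measure_add_measure_compl hA,
      measure_univ, ENNReal.toReal_one]
  have hzw : z + w = 1 := by
    have := hsum _ mZt
    rwa [← hcZ] at this
  have hb1n : b₁ = 1 - n₁ := by
    have := hsum _ mN1t
    rw [← hcN1] at this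
    linarith
  have hb2n : b₂ = 1 - n₂ := by
    have := hsum _ mN2t
    rw [← hcN2] at this
    linarith
  -- pairwise independence facts
  have hZN1 : IndepFun Z N₁ μ := by
    have := hindep.indepFun (show (0:Fin 3) ≠ 1 by decide)
    simpa using this
  have hZN2 : IndepFun Z N₂ μ := by
    have := hindep.indepFun (show (0:Fin 3) ≠ 2 by decide)
    simpa using this
  -- P(X = 1) and P(Y = 1) via complements
  have hXc : {ω | (Z ω || N₁ ω) = true}ᶜ = {ω | Z ω = false} ∩ {ω | N₁ ω = false} := by
    ext ω; simp [Bool.or_eq_true]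
  have hYc : {ω | (Z ω || N₂ ω) = true}ᶜ = {ω | Z ω = false} ∩ {ω | N₂ ω = false} := by
    ext ω; simp [Bool.or_eq_true]
  have hZfN1f : μ ({ω | Z ω = false} ∩ {ω | N₁ ω = false}) =
      μ {ω | Z ω = false} * μ {ω | N₁ ω = false} := by
    have := hZN1.measure_inter_preimage_eq_mul {false} {false}
      (measurableSet_singleton false) (measurableSet_singleton false)
    simpa [Set.preimage] using this
  have hZfN2f : μ ({ω | Z ω = false} ∩ {ω | N₂ ω = false}) =
      μ {ω | Z ω = false} * μ {ω | N₂ ω = false} := by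
    have := hZN2.measure_inter_preimage_eq_mul {false} {false}
      (measurableSet_singleton false) (measurableSet_singleton false)
    simpa [Set.preimage] using this
  have mXt : MeasurableSet {ω | (Z ω || N₁ ω) = true} := by
    have : {ω | (Z ω || N₁ ω) = true} = {ω | Z ω = true} ∪ {ω | N₁ ω = true} := by
      ext ω; simp [Bool.or_eq_true]
    rw [this]; exact mZt.union mN1t
  have mYt : MeasurableSet {ω | (Z ω || N₂ ω) = true} := by
    have : {ω | (Z ω || N₂ ω) = true} = {ω | Z ω = true} ∪ {ω | N₂ ω = true} := by
      ext ω; simp [Bool.or_eq_true]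
    rw [this]; exact mZt.union mN2t
  have hPX : (μ {ω | (Z ω || N₁ ω) = true}).toReal = 1 - w * b₁ := by
    have h1 := hsum _ mXt
    rw [hXc, hZfN1f, ENNReal.toReal_mul] at h1
    linarith
  have hPY : (μ {ω | (Z ω || N₂ ω) = true}).toReal = 1 - w * b₂ := by
    have h1 := hsum _ mYt
    rw [hYc, hZfN2f, ENNReal.toReal_mul] at h1
    linarith
  -- triple independence for P(Z=0, N₁=1, N₂=1)
  have htriple : μ ({ω | Z ω = false} ∩ ({ω | N₁ ω = true} ∩ {ω | N₂ ω = true})) =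
      μ {ω | Z ω = false} * (μ {ω | N₁ ω = true} * μ {ω | N₂ ω = true}) := by
    have hmeas : ∀ i, MeasurableSet[(fun _ : Fin 3 => (inferInstance : MeasurableSpace Bool)) i |>.comap
        (![Z, N₁, N₂] i)]
        (![{ω | Z ω = false}, {ω | N₁ ω = true}, {ω | N₂ ω = true}] i) := by
      intro i
      fin_cases i
      · exact ⟨{false}, measurableSet_singleton false, rfl⟩
      · exact ⟨{true}, measurableSet_singleton true, rfl⟩
      · exact ⟨{true}, measurableSet_singleton true, rfl⟩
    have := hindep.meas_iInter hmeas
    have hI : (⋂ i, ![{ω | Z ω = false}, {ω | N₁ ω = true}, {ω | N₂ ω = true}] i) =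
        {ω | Z ω = false} ∩ ({ω | N₁ ω = true} ∩ {ω | N₂ ω = true}) := by
      ext ω
      simp [Set.mem_iInter, Fin.forall_fin_succ, and_assoc]
    rw [hI, Fin.prod_univ_three] at this
    simpa [mul_assoc] using this
  -- decompose X=1 ∧ Y=1
  have hdecomp : {ω | (Z ω || N₁ ω) = true} ∩ {ω | (Z ω || N₂ ω) = true} =
      {ω | Z ω = true} ∪ ({ω | Z ω = false} ∩ ({ω | N₁ ω = true} ∩ {ω | N₂ ω = true})) := by
    ext ω
    rcases Bool.dichotomy (Z ω) with h | h <;> simp [h]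
  have hdisj : Disjoint {ω | Z ω = true}
      ({ω | Z ω = false} ∩ ({ω | N₁ ω = true} ∩ {ω | N₂ ω = true})) := by
    rw [Set.disjoint_left]
    rintro ω h1 ⟨h2, -⟩
    simp_all
  have hPXY : (μ ({ω | (Z ω || N₁ ω) = true} ∩ {ω | (Z ω || N₂ ω) = true})).toReal =
      z + w * (n₁ * n₂) := by
    rw [hdecomp, measure_union hdisj (mZf.inter (mN1t.inter mN2t)), htriple,
      ENNReal.toReal_add (hfin _) (by
        exact ENNReal.mul_ne_top (hfin _) (ENNReal.mul_ne_top (hfin _) (hfin _))),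
      ENNReal.toReal_mul, ENNReal.toReal_mul]
  -- first part
  have hmain : (μ ({ω | (Z ω || N₁ ω) = true} ∩ {ω | (Z ω || N₂ ω) = true})).toReal
      - (μ {ω | (Z ω || N₁ ω) = true}).toReal * (μ {ω | (Z ω || N₂ ω) = true}).toReal
      = z * w * (1 - n₁) * (1 - n₂) := by
    rw [hPXY, hPX, hPY, hb1n, hb2n]
    linear_combination (1 - w * (1 - n₁) * (1 - n₂)) * hzw
  refine ⟨hmain, fun hz0 hz1 hn1' hn2' => ?_⟩
  -- positivity of each factor in ℝ
  have hzR : 0 < z := ENNReal.toReal_pos hz0.ne' (hfin _)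
  have hz1R : z < 1 := by
    rw [hz]
    have := ENNReal.toReal_lt_toReal (hfin _) ENNReal.one_ne_top |>.2 hz1
    simpa using this
  have hwR : 0 < w := by linarith [hzw]
  have hn1R : n₁ < 1 := by
    have := ENNReal.toReal_lt_toReal (hfin _) ENNReal.one_ne_top |>.2 hn1'
    simpa using this
  have hn2R : n₂ < 1 := by
    have := ENNReal.toReal_lt_toReal (hfin _) ENNReal.one_ne_top |>.2 hn2'
    simpa using this
  have hpos : 0 < z * w * (1 - n₁) * (1 - n₂) :=
    mul_pos (mul_pos (mul_pos hzR hwR) (by linarith)) (by linarith)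
  have hltR : (μ {ω | (Z ω || N₁ ω) = true}).toReal * (μ {ω | (Z ω || N₂ ω) = true}).toReal
      < (μ ({ω | (Z ω || N₁ ω) = true} ∩ {ω | (Z ω || N₂ ω) = true})).toReal := by
    linarith [hmain]
  have hlt : μ {ω | (Z ω || N₁ ω) = true} * μ {ω | (Z ω || N₂ ω) = true}
      < μ ({ω | (Z ω || N₁ ω) = true} ∩ {ω | (Z ω || N₂ ω) = true}) := by
    have hne : μ {ω | (Z ω || N₁ ω) = true} * μ {ω | (Z ω || N₂ ω) = true} ≠ ⊤ :=
      ENNReal.mul_ne_top (hfin _) (hfin _)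
    rw [← ENNReal.toReal_lt_toReal hne (hfin _), ENNReal.toReal_mul]
    exact hltR
  refine ⟨hlt, fun hIndep => ?_⟩
  have := hIndep.measure_inter_preimage_eq_mul {true} {true}
    (measurableSet_singleton true) (measurableSet_singleton true)
  simp only [Set.preimage, Set.mem_singleton_iff] at this
  rw [this] at hlt
  exact lt_irrefl _ hlt
end
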